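/- Let ξ : ℤ → {0,1} be a non-periodic Toeplitz sequence with period structure (p_ℓ)_{ℓ≥1}, Ω the associated odometer with Haar probability measure μ, and W = cl(U) the window constructed from ξ. Then lim_{ℓ→∞} D(p_ℓ) = 1 if and only if μ(∂W) = 0; that is, ξ is a regular Toeplitz sequence if and only if the boundary of the window W has Haar measure zero. -/

import Mathlib

open MeasureTheory Set Filter Topology

noncomputable section

instance (n : ℕ) : TopologicalSpace (ZMod n) := ⊥
instance (n : ℕ) : DiscreteTopology (ZMod n) := ⟨rfl⟩
instance (n : ℕ) : MeasurableSpace (ZMod n) := ⊤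

/-- The `p`-skeleton of a sequence `ξ : ℤ → {0,1}`:
the set of `p`-periodic positions of `ξ`. -/
def Per (ξ : ℤ → Fin 2) (p : ℕ) : Set ℤ := {k | ∀ n : ℤ, ξ (k + n * p) = ξ k}

/-- The density `D(p)` of the `p`-skeleton:
`D(p) = #(Per(p,ξ) ∩ [0, p-1]) / p`. -/
def skelDensity (ξ : ℤ → Fin 2) (p : ℕ) : ℝ :=
  ((Per ξ p ∩ Set.Ico (0 : ℤ) (p : ℤ)).ncard : ℝ) / p

/-- `ξ` is a Toeplitz sequence: every position is periodic for some period `p ≥ 1`. -/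
def IsToeplitz (ξ : ℤ → Fin 2) : Prop := ∀ k : ℤ, ∃ p : ℕ, 0 < p ∧ k ∈ Per ξ p

/-- `ξ` is non-periodic: no `p ≥ 1` is a period of the whole sequence. -/
def IsNonPeriodic (ξ : ℤ → Fin 2) : Prop := ∀ p : ℕ, 0 < p → ∃ k : ℤ, ξ (k + p) ≠ ξ k

/-- `(p ℓ)` is a period structure for `ξ`: the `p ℓ` are positive, each divides the
next, and the `p ℓ`-skeletons exhaust `ℤ`. -/
def IsPeriodStructure (ξ : ℤ → Fin 2) (p : ℕ → ℕ) : Prop :=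
  (∀ ℓ, 0 < p ℓ) ∧ (∀ ℓ, p ℓ ∣ p (ℓ + 1)) ∧ ∀ k : ℤ, ∃ ℓ, k ∈ Per ξ (p ℓ)

/-- The odometer associated with a scale `p`, i.e. the closed subgroup of
`∏ ℓ, ℤ/p ℓ ℤ` of sequences compatible under the canonical projections
(whenever `p ℓ ∣ p (ℓ+1)`, which holds for period structures). -/
def odometer (p : ℕ → ℕ) : AddSubgroup (Π ℓ, ZMod (p ℓ)) where
  carrier := {x | ∀ ℓ, ∀ h : p ℓ ∣ p (ℓ + 1), ZMod.castHom h (ZMod (p ℓ)) (x (ℓ + 1)) = x ℓ}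
  zero_mem' := by intro ℓ _; simp
  add_mem' := by intro a b ha hb ℓ h; simp only [Pi.add_apply, map_add, ha ℓ h, hb ℓ h]
  neg_mem' := by intro a ha ℓ h; simp only [Pi.neg_apply, map_neg, ha ℓ h]

/-- The distinguished element `e` of the odometer, whose `ℓ`-th coordinate is
`1 mod p ℓ`; its `n`-th multiple `n • e` has `ℓ`-th coordinate `n mod p ℓ`. -/
def odometerGen (p : ℕ → ℕ) : odometer p := ⟨fun _ => 1, fun _ _ => map_one _⟩

/-- `A_s(ℓ) = {k mod p ℓ : k ∈ Per (p ℓ, ξ), ξ k = s} ⊆ ℤ/p ℓ ℤ`. -/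
def Aset (ξ : ℤ → Fin 2) (p : ℕ → ℕ) (ℓ : ℕ) (s : Fin 2) : Set (ZMod (p ℓ)) :=
  {c | ∃ k : ℤ, k ∈ Per ξ (p ℓ) ∧ ξ k = s ∧ (k : ZMod (p ℓ)) = c}

/-- `U_ℓ = {x ∈ Ω : x ℓ ∈ A_1(ℓ)}`. -/
def UsetL (ξ : ℤ → Fin 2) (p : ℕ → ℕ) (ℓ : ℕ) : Set (odometer p) :=
  {x | (x : Π ℓ, ZMod (p ℓ)) ℓ ∈ Aset ξ p ℓ 1}

/-- `V_ℓ = {x ∈ Ω : x ℓ ∈ A_0(ℓ)}`. -/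
def VsetL (ξ : ℤ → Fin 2) (p : ℕ → ℕ) (ℓ : ℕ) : Set (odometer p) :=
  {x | (x : Π ℓ, ZMod (p ℓ)) ℓ ∈ Aset ξ p ℓ 0}

/-- `U = ⋃ ℓ, U_ℓ`. -/
def Uset (ξ : ℤ → Fin 2) (p : ℕ → ℕ) : Set (odometer p) := ⋃ ℓ, UsetL ξ p ℓ

/-- `V = ⋃ ℓ, V_ℓ`. -/
def Vset (ξ : ℤ → Fin 2) (p : ℕ → ℕ) : Set (odometer p) := ⋃ ℓ, VsetL ξ p ℓ

/-- The window `W = cl(U)` constructed from `ξ`. -/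
def Wset (ξ : ℤ → Fin 2) (p : ℕ → ℕ) : Set (odometer p) := closure (Uset ξ p)

section Aux


/-!
The level sets `U_ℓ ∪ V_ℓ` are preimages, under the `ℓ`-th coordinate of the odometer, of the
residues of the `p_ℓ`-skeleton, so their Haar measure is exactly `D(p_ℓ)`; they increase to
`U ∪ V`, hence `D(p_ℓ) → μ(U ∪ V)`. On the other hand `U` and `V` are disjoint open sets, and
every point outside `U ∪ V` is a limit of points of `U` and of points of `V`: none of its residue
classes contains a periodic position, so `ξ` takes both values on each of them. Hence
`∂W = (U ∪ V)ᶜ`, and `μ(∂W) = 0` exactly when `μ(U ∪ V) = 1`.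
-/

open scoped ENNReal

instance AddSubgroup.instMeasurableAdd {G : Type*} [MeasurableSpace G] [AddGroup G]
    [MeasurableAdd G] (H : AddSubgroup G) : MeasurableAdd H where
  measurable_const_add c := (measurable_subtype_coe.const_add (c : G)).subtype_mk
  measurable_add_const c := (measurable_subtype_coe.add_const (c : G)).subtype_mk

theorem AddMonoidHom.measure_preimage_eq_ncard_mul_inv_card {G H : Type*} [AddGroup G]
    [MeasurableSpace G] [MeasurableAdd G] [AddGroup H] [Finite H] [MeasurableSpace H]
    [MeasurableSingletonClass H]
    (μ : Measure G) [IsProbabilityMeasure μ] [μ.IsAddLeftInvariant] (f : G →+ H)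
    (hf : Measurable f) (hsurj : Function.Surjective f) (S : Set H) :
    μ (f ⁻¹' S) = S.ncard * (Nat.card H : ℝ≥0∞)⁻¹ := by
  have hfiber : ∀ h, μ (f ⁻¹' {h}) = μ (f ⁻¹' {0}) := by
    intro h
    obtain ⟨g, rfl⟩ := hsurj h
    rw [← measure_preimage_add μ g]
    congr 1
    ext x
    simp
  have hcount : ∀ S : Set H, μ (f ⁻¹' S) = S.ncard * μ (f ⁻¹' {0}) := by
    intro S
    lift S to Finset H using S.toFinite
    rw [← sum_measure_preimage_singleton _ fun h _ => hf (measurableSet_singleton h),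
      Finset.sum_congr rfl fun h _ => hfiber h, Finset.sum_const, nsmul_eq_mul, ncard_coe_finset]
  have hzero : μ (f ⁻¹' {0}) = (Nat.card H : ℝ≥0∞)⁻¹ := by
    have := hcount univ
    rw [preimage_univ, measure_univ, ncard_univ, eq_comm, mul_comm] at this
    exact ENNReal.eq_inv_of_mul_eq_one_left this
  rw [hcount, hzero]

section Skeleton

variable {ξ : ℤ → Fin 2}

theorem Per.of_intCast_eq {q : ℕ} {k k' : ℤ} (hk : k ∈ Per ξ q) (h : (k : ZMod q) = k') :
    k' ∈ Per ξ q ∧ ξ k' = ξ k := by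
  obtain ⟨n, hn⟩ := (ZMod.intCast_eq_intCast_iff_dvd_sub k k' q).mp h
  obtain rfl : k' = k + n * q := by linarith
  refine ⟨fun m => ?_, hk n⟩
  rw [add_assoc, ← add_mul, hk, hk]

theorem Per.mono {q r : ℕ} (h : q ∣ r) : Per ξ q ⊆ Per ξ r := by
  obtain ⟨t, rfl⟩ := h
  intro k hk n
  rw [show k + n * ((q * t : ℕ) : ℤ) = k + n * t * q by push_cast; ring]
  exact hk _

theorem ncard_intCast_image_Per {q : ℕ} (hq : 0 < q) :
    ((Int.cast : ℤ → ZMod q) '' Per ξ q).ncard = (Per ξ q ∩ Ico 0 (q : ℤ)).ncard := by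
  have hq' : (0 : ℤ) < q := by exact_mod_cast hq
  have himage : (Int.cast : ℤ → ZMod q) '' Per ξ q = Int.cast '' (Per ξ q ∩ Ico 0 (q : ℤ)) := by
    refine (image_mono inter_subset_left).antisymm' ?_
    rintro _ ⟨k, hk, rfl⟩
    have hmod : ((k % q : ℤ) : ZMod q) = k := ZMod.intCast_mod k q
    exact ⟨k % q, ⟨(Per.of_intCast_eq hk hmod.symm).1, Int.emod_nonneg k hq'.ne',
      Int.emod_lt_of_pos k hq'⟩, hmod⟩
  rw [himage, InjOn.ncard_image]
  rintro k ⟨-, hk⟩ k' ⟨-, hk'⟩ h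
  have := (ZMod.intCast_eq_intCast_iff' k k' q).mp h
  rwa [Int.emod_eq_of_lt hk.1 hk.2, Int.emod_eq_of_lt hk'.1 hk'.2] at this

theorem exists_intCast_eq_of_notMem_intCast_image_Per {q : ℕ} {c : ZMod q}
    (hc : c ∉ (Int.cast : ℤ → ZMod q) '' Per ξ q) (s : Fin 2) :
    ∃ k : ℤ, (k : ZMod q) = c ∧ ξ k = s := by
  by_contra! hne
  obtain ⟨k, rfl⟩ := ZMod.intCast_surjective c
  refine hc ⟨k, fun n => ?_, rfl⟩
  have h₁ := hne (k + n * q) (by simp)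
  have h₂ := hne k rfl
  omega

end Skeleton

namespace odometer

variable {p : ℕ → ℕ}

variable (p) in
def coord (ℓ : ℕ) : odometer p →+ ZMod (p ℓ) :=
  (Pi.evalAddMonoidHom (fun ℓ => ZMod (p ℓ)) ℓ).comp (odometer p).subtype

theorem continuous_coord (ℓ : ℕ) : Continuous (coord p ℓ) :=
  (continuous_apply ℓ).comp continuous_subtype_val

theorem measurable_coord (ℓ : ℕ) : Measurable (coord p ℓ) :=
  (measurable_pi_apply ℓ).comp measurable_subtype_coe

@[simp]
theorem coord_zsmul_odometerGen (ℓ : ℕ) (k : ℤ) : coord p ℓ (k • odometerGen p) = k := by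
  simp [coord, odometerGen]

theorem coord_surjective (ℓ : ℕ) : Function.Surjective (coord p ℓ) := fun c =>
  let ⟨k, hk⟩ := ZMod.intCast_surjective c
  ⟨k • odometerGen p, by simp [hk]⟩

theorem castHom_coord_succ {ℓ : ℕ} (h : p ℓ ∣ p (ℓ + 1)) (x : odometer p) :
    ZMod.castHom h (ZMod (p ℓ)) (coord p (ℓ + 1) x) = coord p ℓ x :=
  x.2 ℓ h

theorem coord_eq_of_le (hdvd : ∀ ℓ, p ℓ ∣ p (ℓ + 1)) {x y : odometer p} {i j : ℕ} (hij : i ≤ j)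
    (h : coord p j x = coord p j y) : coord p i x = coord p i y := by
  induction j, hij using Nat.le_induction with
  | base => exact h
  | succ j _ ih => exact ih (by rw [← castHom_coord_succ (hdvd j), h, castHom_coord_succ])

theorem exists_coord_eq_subset (hdvd : ∀ ℓ, p ℓ ∣ p (ℓ + 1)) {O : Set (odometer p)}
    (hO : IsOpen O) {x : odometer p} (hx : x ∈ O) : ∃ ℓ, {y | coord p ℓ y = coord p ℓ x} ⊆ O := by
  obtain ⟨O', hO', rfl⟩ := isOpen_induced_iff.mp hO
  obtain ⟨I, u, hu, hIu⟩ := isOpen_pi_iff.mp hO' _ hx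
  refine ⟨I.sup id, fun y hy => hIu fun i hi => ?_⟩
  have : (y : Π ℓ, ZMod (p ℓ)) i = (x : Π ℓ, ZMod (p ℓ)) i :=
    coord_eq_of_le hdvd (Finset.le_sup (f := id) hi) hy
  exact this ▸ (hu i hi).2

end odometer

theorem frontier_closure_eq_compl_union {X : Type*} [TopologicalSpace X] {U V : Set X}
    (hU : IsOpen U) (hV : IsOpen V) (hUV : Disjoint U V) (h : (U ∪ V)ᶜ ⊆ closure U ∩ closure V) :
    frontier (closure U) = (U ∪ V)ᶜ := by
  have hclV : Disjoint (closure U) V := hUV.closure_left hV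
  refine Subset.antisymm (fun x ⟨hxU, hxint⟩ => ?_) fun x hx => ?_
  · rw [closure_closure] at hxU
    rintro (hx | hx)
    exacts [hxint (interior_maximal subset_closure hU hx), hclV.notMem_of_mem_left hxU hx]
  · obtain ⟨hxU, hxV⟩ := h hx
    refine ⟨subset_closure hxU, fun hint => ?_⟩
    obtain ⟨y, hyint, hyV⟩ := mem_closure_iff.mp hxV _ isOpen_interior hint
    exact hclV.notMem_of_mem_left (interior_subset hyint) hyV

section Window

open odometer

variable {ξ : ℤ → Fin 2} {p : ℕ → ℕ}

theorem mem_Aset_of_castHom_mem {ℓ m : ℕ} (h : p ℓ ∣ p m) {c : ZMod (p m)} {s : Fin 2}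
    (hc : ZMod.castHom h (ZMod (p ℓ)) c ∈ Aset ξ p ℓ s) : c ∈ Aset ξ p m s := by
  obtain ⟨k, rfl⟩ := ZMod.intCast_surjective c
  obtain ⟨k', hk', hk's, hk'k⟩ := hc
  rw [map_intCast] at hk'k
  obtain ⟨hk, hkk'⟩ := Per.of_intCast_eq hk' hk'k
  exact ⟨k, Per.mono h hk, hkk'.trans hk's, rfl⟩

theorem monotone_preimage_coord_Aset (hdvd : ∀ ℓ, p ℓ ∣ p (ℓ + 1)) (s : Fin 2) :
    Monotone fun ℓ => coord p ℓ ⁻¹' Aset ξ p ℓ s :=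
  monotone_nat_of_le_succ fun ℓ _ hx =>
    mem_Aset_of_castHom_mem (hdvd ℓ) (by rwa [castHom_coord_succ])

theorem disjoint_Aset (ℓ : ℕ) : Disjoint (Aset ξ p ℓ 0) (Aset ξ p ℓ 1) := by
  rw [disjoint_left]
  rintro _ ⟨k, hk, hk0, rfl⟩ ⟨k', -, hk'1, hk'k⟩
  have := (Per.of_intCast_eq hk hk'k.symm).2
  rw [hk0, hk'1] at this
  exact absurd this (by decide)

theorem Aset_zero_union_Aset_one (ℓ : ℕ) :
    Aset ξ p ℓ 0 ∪ Aset ξ p ℓ 1 = (Int.cast : ℤ → ZMod (p ℓ)) '' Per ξ (p ℓ) := by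
  ext c
  constructor
  · rintro (⟨k, hk, -, rfl⟩ | ⟨k, hk, -, rfl⟩) <;> exact ⟨k, hk, rfl⟩
  · rintro ⟨k, hk, rfl⟩
    obtain h | h : ξ k = 0 ∨ ξ k = 1 := by omega
    exacts [Or.inl ⟨k, hk, h, rfl⟩, Or.inr ⟨k, hk, h, rfl⟩]

theorem disjoint_Uset_Vset (hdvd : ∀ ℓ, p ℓ ∣ p (ℓ + 1)) : Disjoint (Uset ξ p) (Vset ξ p) := by
  simp only [Uset, Vset, disjoint_iUnion_left, disjoint_iUnion_right]
  intro m ℓ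
  exact ((disjoint_Aset (max ℓ m)).preimage (coord p (max ℓ m))).symm.mono
    (monotone_preimage_coord_Aset hdvd 1 (le_max_left ℓ m))
    (monotone_preimage_coord_Aset hdvd 0 (le_max_right ℓ m))

theorem compl_Uset_union_Vset_subset_closure (hdvd : ∀ ℓ, p ℓ ∣ p (ℓ + 1))
    (hexh : ∀ k : ℤ, ∃ ℓ, k ∈ Per ξ (p ℓ)) (s : Fin 2) :
    (Uset ξ p ∪ Vset ξ p)ᶜ ⊆ closure (⋃ ℓ, coord p ℓ ⁻¹' Aset ξ p ℓ s) := by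
  intro x hx
  rw [mem_closure_iff]
  intro O hO hxO
  obtain ⟨ℓ, hℓ⟩ := exists_coord_eq_subset hdvd hO hxO
  have hc : coord p ℓ x ∉ (Int.cast : ℤ → ZMod (p ℓ)) '' Per ξ (p ℓ) := by
    rw [← Aset_zero_union_Aset_one]
    rintro (h | h)
    exacts [hx (Or.inr (mem_iUnion_of_mem ℓ h)), hx (Or.inl (mem_iUnion_of_mem ℓ h))]
  obtain ⟨k, hkx, hks⟩ := exists_intCast_eq_of_notMem_intCast_image_Per hc s
  obtain ⟨m, hm⟩ := hexh k
  exact ⟨k • odometerGen p, hℓ (by simp [hkx]), mem_iUnion_of_mem m ⟨k, hm, hks, by simp⟩⟩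

theorem frontier_Wset (hdvd : ∀ ℓ, p ℓ ∣ p (ℓ + 1)) (hexh : ∀ k : ℤ, ∃ ℓ, k ∈ Per ξ (p ℓ)) :
    frontier (Wset ξ p) = (Uset ξ p ∪ Vset ξ p)ᶜ := by
  have hopen : ∀ s, IsOpen (⋃ ℓ, coord p ℓ ⁻¹' Aset ξ p ℓ s) := fun s =>
    isOpen_iUnion fun ℓ => (isOpen_discrete _).preimage (continuous_coord ℓ)
  exact frontier_closure_eq_compl_union (hopen 1) (hopen 0) (disjoint_Uset_Vset hdvd)
    fun x hx => ⟨compl_Uset_union_Vset_subset_closure hdvd hexh 1 hx,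
      compl_Uset_union_Vset_subset_closure hdvd hexh 0 hx⟩

end Window

section Density

open odometer

variable {ξ : ℤ → Fin 2} {p : ℕ → ℕ}

theorem UsetL_union_VsetL (ℓ : ℕ) :
    UsetL ξ p ℓ ∪ VsetL ξ p ℓ = coord p ℓ ⁻¹' ((Int.cast : ℤ → ZMod (p ℓ)) '' Per ξ (p ℓ)) := by
  rw [← Aset_zero_union_Aset_one, preimage_union, union_comm]
  rfl

theorem measure_UsetL_union_VsetL {ℓ : ℕ} (hp : 0 < p ℓ) (μ : Measure (odometer p))
    [IsProbabilityMeasure μ] [μ.IsAddLeftInvariant] :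
    (μ (UsetL ξ p ℓ ∪ VsetL ξ p ℓ)).toReal = skelDensity ξ (p ℓ) := by
  have : NeZero (p ℓ) := ⟨hp.ne'⟩
  rw [UsetL_union_VsetL, (coord p ℓ).measure_preimage_eq_ncard_mul_inv_card μ
    (measurable_coord ℓ) (coord_surjective ℓ), ncard_intCast_image_Per hp, Nat.card_zmod,
    skelDensity]
  simp [div_eq_mul_inv]

theorem tendsto_skelDensity (hpos : ∀ ℓ, 0 < p ℓ) (hdvd : ∀ ℓ, p ℓ ∣ p (ℓ + 1))
    (μ : Measure (odometer p)) [IsProbabilityMeasure μ] [μ.IsAddLeftInvariant] :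
    Tendsto (fun ℓ => skelDensity ξ (p ℓ)) atTop (𝓝 (μ (Uset ξ p ∪ Vset ξ p)).toReal) := by
  have hmono : Monotone fun ℓ => UsetL ξ p ℓ ∪ VsetL ξ p ℓ :=
    (monotone_preimage_coord_Aset hdvd 1).sup (monotone_preimage_coord_Aset hdvd 0)
  have := (ENNReal.tendsto_toReal_iff (fun ℓ => measure_ne_top μ _) (measure_ne_top μ _)).mpr
    (tendsto_measure_iUnion_atTop hmono)
  simpa only [measure_UsetL_union_VsetL (hpos _), Uset, Vset, iUnion_union_distrib] using this

theorem measurableSet_Uset_union_Vset : MeasurableSet (Uset ξ p ∪ Vset ξ p) :=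
  (MeasurableSet.iUnion fun ℓ => measurable_coord ℓ .of_discrete).union
    (MeasurableSet.iUnion fun ℓ => measurable_coord ℓ .of_discrete)

end Density

theorem toeplitz_regular_iff_null_boundary_general (ξ : ℤ → Fin 2)
    (p : ℕ → ℕ) (hps : IsPeriodStructure ξ p)
    (μ : Measure (odometer p)) (hμ : μ.IsAddHaarMeasure) (hμ1 : IsProbabilityMeasure μ) :
    Tendsto (fun ℓ => skelDensity ξ (p ℓ)) atTop (𝓝 1) ↔
      μ (frontier (Wset ξ p)) = 0 := by
  obtain ⟨hpos, hdvd, hexh⟩ := hps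
  have hlim := tendsto_skelDensity (ξ := ξ) hpos hdvd μ
  rw [frontier_Wset hdvd hexh, prob_compl_eq_zero_iff measurableSet_Uset_union_Vset]
  exact ⟨fun h => (ENNReal.toReal_eq_one_iff _).mp (tendsto_nhds_unique hlim h),
    fun h => by simpa [h] using hlim⟩

/-- A non-periodic Toeplitz sequence `ξ` with period structure
`(p ℓ)` is regular (`lim_ℓ D(p ℓ) = 1`) if and only if the boundary of the window
`W = cl U` has Haar measure zero. -/
theorem toeplitz_regular_iff_null_boundary (ξ : ℤ → Fin 2) (hT : IsToeplitz ξ)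
    (hNP : IsNonPeriodic ξ) (p : ℕ → ℕ) (hps : IsPeriodStructure ξ p)
    (μ : Measure (odometer p)) (hμ : μ.IsAddHaarMeasure) (hμ1 : IsProbabilityMeasure μ) :
    Tendsto (fun ℓ => skelDensity ξ (p ℓ)) atTop (𝓝 1) ↔
      μ (frontier (Wset ξ p)) = 0 :=
  toeplitz_regular_iff_null_boundary_general ξ p hps μ hμ hμ1
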